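/- Let P and Q be nonzero integers with D = P^2 - 4Q ≠ 0, let U = U(P,Q) be nondegenerate, and let p be an odd prime with p ∤ D and p ∤ gcd(P,Q). Let n ≥ 1 satisfy gcd(p,n) = 1 and p ∣ U_n (equivalently, the entry point of p in U divides n). Then for every k ≥ 1 there exists an integer t such that U_{p^k n} = (p + p^{k+1}·t)·U_{p^{k-1} n}. -/

import Mathlib

/-- Lucas sequence of the first kind: `U 0 = 0`, `U 1 = 1`,
`U (n+2) = P * U (n+1) - Q * U n`. -/
def lucasU (P Q : ℤ) : ℕ → ℤ
  | 0 => 0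
  | 1 => 1
  | n + 2 => P * lucasU P Q (n + 1) - Q * lucasU P Q n

/-!
Write `V_m = 2 U_{m+1} - P U_m` for the companion sequence. The addition formulas for `U` and
`V` give, by induction on `j`, `2^j U_{(j+1)m} ≡ (j+1) U_m V_m^j (mod U_m^3)`, and
`V_m^2 = D U_m^2 + 4 Q^m` turns `V_m^{p-1}` into `2^{p-1} Q^{m(p-1)/2}` modulo `U_m^2`.
Hence, if `p^r` divides both `U_m` and `Q^{m(p-1)/2} - 1` (`r ≥ 1`), then
`U_{pm} ≡ p U_m (mod p^{r+1} U_m)`. Both divisibilities propagate from `m = p^j n` to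
`p^{j+1} n`: the first by this very congruence, the second by lifting the exponent. They hold
for `j = 0` because `Q^n ≡ U_{n+1}^2 (mod p)` by Cassini's identity, and `p ∤ U_{n+1}` as
`p ∤ gcd(P, Q)`.
-/

section Lucas

variable (P Q : ℤ)

def lucasV (m : ℕ) : ℤ := 2 * lucasU P Q (m + 1) - P * lucasU P Q m

theorem lucasU_add_two (m : ℕ) :
    lucasU P Q (m + 2) = P * lucasU P Q (m + 1) - Q * lucasU P Q m := rfl

theorem lucasU_add (a b : ℕ) :
    lucasU P Q (a + b) = lucasU P Q a * lucasU P Q (b + 1) + lucasU P Q (a + 1) * lucasU P Q b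
      - P * lucasU P Q a * lucasU P Q b := by
  induction b using Nat.twoStepInduction with
  | zero => simp [lucasU]
  | one =>
    simp only [lucasU, mul_one, mul_zero, sub_zero]
    ring
  | more b ih₁ ih₂ =>
    have h := lucasU_add_two P Q (b + 1)
    rw [show b + 1 + 2 = b + 2 + 1 from rfl] at h
    rw [show b + 1 + 1 = b + 2 from rfl] at ih₂
    rw [← add_assoc, lucasU_add_two, add_assoc, ih₂, ih₁]
    linear_combination -lucasU P Q a * h
      - (lucasU P Q (a + 1) - P * lucasU P Q a) * lucasU_add_two P Q b

theorem lucasU_cassini (m : ℕ) :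
    lucasU P Q (m + 1) ^ 2 - P * lucasU P Q (m + 1) * lucasU P Q m + Q * lucasU P Q m ^ 2
      = Q ^ m := by
  induction m with
  | zero => simp [lucasU]
  | succ m ih =>
    rw [lucasU_add_two]
    linear_combination Q * ih

theorem lucasU_dvd_mul (m j : ℕ) : lucasU P Q m ∣ lucasU P Q (j * m) := by
  induction j with
  | zero => simp [lucasU]
  | succ j ih =>
    rw [add_one_mul, lucasU_add]
    exact dvd_sub ((ih.mul_right _).add (dvd_mul_left _ _)) (dvd_mul_left _ _)

theorem lucasU_succ_modEq_pow (j : ℕ) : lucasU P Q (j + 1) ≡ P ^ j [ZMOD Q] := by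
  induction j using Nat.twoStepInduction with
  | zero => simp [lucasU]
  | one => simp [lucasU]
  | more j _ ih =>
    calc lucasU P Q (j + 3) = P * lucasU P Q (j + 2) - Q * lucasU P Q (j + 1) := rfl
      _ ≡ P * P ^ (j + 1) - 0 [ZMOD Q] :=
        (ih.mul_left P).sub (Int.modEq_zero_iff_dvd.2 (dvd_mul_right Q _))
      _ = P ^ (j + 2) := by ring

theorem lucasV_sq (m : ℕ) :
    lucasV P Q m ^ 2 = (P ^ 2 - 4 * Q) * lucasU P Q m ^ 2 + 4 * Q ^ m := by
  rw [lucasV, ← lucasU_cassini P Q m]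
  ring

theorem two_mul_lucasU_add (a b : ℕ) :
    2 * lucasU P Q (a + b) = lucasU P Q a * lucasV P Q b + lucasV P Q a * lucasU P Q b := by
  rw [lucasU_add, lucasV, lucasV]
  ring

theorem two_mul_lucasV_add (a b : ℕ) :
    2 * lucasV P Q (a + b)
      = lucasV P Q a * lucasV P Q b + (P ^ 2 - 4 * Q) * lucasU P Q a * lucasU P Q b := by
  have h₁ := lucasU_add P Q a (b + 1)
  have h₂ := lucasU_add P Q a b
  rw [← add_assoc, lucasU_add_two] at h₁
  rw [lucasV, lucasV, lucasV]
  linear_combination 4 * h₁ - 2 * P * h₂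

theorem lucasU_pow_three_dvd_two_pow_mul_lucasU_succ_mul_sub (m j : ℕ) :
    lucasU P Q m ^ 3 ∣
        2 ^ j * lucasU P Q ((j + 1) * m) - (j + 1) * lucasU P Q m * lucasV P Q m ^ j ∧
      lucasU P Q m ^ 2 ∣ 2 ^ j * lucasV P Q ((j + 1) * m) - lucasV P Q m ^ (j + 1) := by
  set u := lucasU P Q m
  set v := lucasV P Q m
  induction j with
  | zero => simp [u, v]
  | succ j ih =>
    obtain ⟨⟨a, ha⟩, ⟨b, hb⟩⟩ := ih
    have hU := two_mul_lucasU_add P Q ((j + 1) * m) m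
    have hV := two_mul_lucasV_add P Q ((j + 1) * m) m
    rw [← add_one_mul] at hU hV
    push_cast
    exact ⟨⟨a * v + b, by linear_combination 2 ^ j * hU + v * ha + u * hb⟩,
      ⟨b * v + (P ^ 2 - 4 * Q) * ((j + 1) * v ^ j + u ^ 2 * a), by
        linear_combination 2 ^ j * hV + v * hb + (P ^ 2 - 4 * Q) * u * ha⟩⟩

theorem lucasU_sq_dvd_lucasV_pow_sub (m e : ℕ) :
    lucasU P Q m ^ 2 ∣ lucasV P Q m ^ (2 * e) - 4 ^ e * Q ^ (m * e) := by
  rw [pow_mul, lucasV_sq, pow_mul, ← mul_pow]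
  have h := sub_dvd_pow_sub_pow ((P ^ 2 - 4 * Q) * lucasU P Q m ^ 2 + 4 * Q ^ m) (4 * Q ^ m) e
  rw [add_sub_cancel_right] at h
  exact (dvd_mul_left _ _).trans h

end Lucas

section Prime

variable {P Q : ℤ} {p : ℕ}

theorem lucasU_odd_mul_eq (hp : Odd p) {m k : ℕ} (hU : (p : ℤ) ^ (k + 1) ∣ lucasU P Q m)
    (hQ : (p : ℤ) ^ (k + 1) ∣ Q ^ (m * (p / 2)) - 1) :
    ∃ t : ℤ, lucasU P Q (p * m) = ((p : ℤ) + (p : ℤ) ^ (k + 2) * t) * lucasU P Q m := by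
  set e := p / 2
  have hp₁ : 2 * e + 1 = p := Nat.two_mul_div_two_add_one_of_odd hp
  obtain ⟨w, hw⟩ := lucasU_dvd_mul P Q m p
  obtain ⟨⟨a, ha⟩, -⟩ := lucasU_pow_three_dvd_two_pow_mul_lucasU_succ_mul_sub P Q m (2 * e)
  rw [← Nat.cast_add_one, hp₁] at ha
  obtain ⟨c, hc⟩ := lucasU_sq_dvd_lucasV_pow_sub P Q m e
  have h4 : (4 : ℤ) ^ e = 2 ^ (2 * e) := by rw [pow_mul]; norm_num
  set u := lucasU P Q m
  rcases eq_or_ne u 0 with hu₀ | hu₀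
  · exact ⟨0, by rw [hw, hu₀]; ring⟩
  obtain ⟨u', hu'⟩ := hU
  obtain ⟨s, hs⟩ := hQ
  -- `2^{p-1} U_{pm} = p u V_m^{p-1} + u^3 a` divided by `u = U_m`
  have key : 2 ^ (2 * e) * (w - p) =
      (p : ℤ) ^ (k + 2) * ((p : ℤ) ^ k * u' ^ 2 * (a + p * c) + 2 ^ (2 * e) * s) := by
    refine mul_left_cancel₀ hu₀ ?_
    linear_combination -2 ^ (2 * e) * hw + ha + p * u * hc + p * u * Q ^ (m * e) * h4
      + p * u * 2 ^ (2 * e) * hs + u * (a + p * c) * (u + (p : ℤ) ^ (k + 1) * u') * hu'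
  have hcop : IsCoprime ((p : ℤ) ^ (k + 2)) (2 ^ (2 * e)) :=
    IsCoprime.pow (by exact_mod_cast Nat.isCoprime_iff_coprime.mpr hp.coprime_two_right)
  obtain ⟨t, ht⟩ := hcop.dvd_of_dvd_mul_left (Dvd.intro _ key.symm)
  exact ⟨t, by rw [hw]; linear_combination u * ht⟩

theorem not_dvd_lucasU_succ_of_dvd_lucasU (hp : p.Prime) (hpPQ : ¬ p ∣ Int.gcd P Q) {n : ℕ}
    (hU : (p : ℤ) ∣ lucasU P Q n) : ¬ (p : ℤ) ∣ lucasU P Q (n + 1) := by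
  intro hU₁
  have hQn : (p : ℤ) ∣ Q ^ n := by
    rw [← lucasU_cassini P Q n]
    exact ((dvd_pow hU₁ two_ne_zero).sub ((hU₁.mul_left P).mul_right _)).add
      ((dvd_pow hU two_ne_zero).mul_left Q)
  have hQ : (p : ℤ) ∣ Q := Int.Prime.dvd_pow' hp hQn
  have hPn : (p : ℤ) ∣ P ^ n :=
    (dvd_sub_left hU₁).mp ((lucasU_succ_modEq_pow P Q n).of_dvd hQ).dvd
  exact hpPQ (Int.natCast_dvd_natCast.mp (Int.dvd_coe_gcd (Int.Prime.dvd_pow' hp hPn) hQ))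

theorem pow_mul_div_two_modEq_one_of_dvd_lucasU (hp : p.Prime) (hodd : Odd p)
    (hpPQ : ¬ p ∣ Int.gcd P Q) {n : ℕ} (hU : (p : ℤ) ∣ lucasU P Q n) :
    Q ^ (n * (p / 2)) ≡ 1 [ZMOD p] := by
  set U₁ := lucasU P Q (n + 1)
  have hQn : Q ^ n ≡ U₁ ^ 2 [ZMOD p] := by
    refine Int.modEq_iff_dvd.mpr ?_
    rw [← lucasU_cassini P Q n,
      show U₁ ^ 2 - (U₁ ^ 2 - P * U₁ * lucasU P Q n + Q * lucasU P Q n ^ 2)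
        = lucasU P Q n * (P * U₁ - Q * lucasU P Q n) by ring]
    exact hU.mul_right _
  have hcop : IsCoprime U₁ p := ((Nat.prime_iff_prime_int.mp hp).coprime_iff_not_dvd.mpr
    (not_dvd_lucasU_succ_of_dvd_lucasU hp hpPQ hU)).symm
  calc Q ^ (n * (p / 2)) = (Q ^ n) ^ (p / 2) := pow_mul _ _ _
    _ ≡ (U₁ ^ 2) ^ (p / 2) [ZMOD p] := hQn.pow _
    _ = U₁ ^ (p - 1) := by rw [← pow_mul, Nat.two_mul_odd_div_two (Nat.odd_iff.mp hodd)]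
    _ ≡ 1 [ZMOD p] := Int.ModEq.pow_card_sub_one_eq_one hp hcop

theorem pow_succ_dvd_pow_mul_div_two_sub_one_of_dvd_lucasU (hp : p.Prime) (hodd : Odd p)
    (hpPQ : ¬ p ∣ Int.gcd P Q) {n : ℕ} (hU : (p : ℤ) ∣ lucasU P Q n) (j : ℕ) :
    (p : ℤ) ^ (j + 1) ∣ Q ^ (p ^ j * n * (p / 2)) - 1 := by
  have h := dvd_sub_pow_of_dvd_sub
    (pow_mul_div_two_modEq_one_of_dvd_lucasU hp hodd hpPQ hU).symm.dvd j
  rwa [one_pow, ← pow_mul, mul_comm, ← mul_assoc] at h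

theorem pow_succ_dvd_lucasU_pow_mul (hp : p.Prime) (hodd : Odd p) (hpPQ : ¬ p ∣ Int.gcd P Q)
    {n : ℕ} (hU : (p : ℤ) ∣ lucasU P Q n) (j : ℕ) :
    (p : ℤ) ^ (j + 1) ∣ lucasU P Q (p ^ j * n) := by
  induction j with
  | zero => simpa using hU
  | succ j ih =>
    obtain ⟨t, ht⟩ := lucasU_odd_mul_eq hodd ih
      (pow_succ_dvd_pow_mul_div_two_sub_one_of_dvd_lucasU hp hodd hpPQ hU j)
    rw [pow_succ' p j, mul_assoc, ht,
      show ((p : ℤ) + p ^ (j + 2) * t) * lucasU P Q (p ^ j * n)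
        = p * ((1 + p ^ (j + 1) * t) * lucasU P Q (p ^ j * n)) by ring, pow_succ' _ (j + 1)]
    exact mul_dvd_mul_left _ (ih.mul_left _)

end Prime

theorem stmt_12_general (P Q : ℤ) (p : ℕ) (hp : p.Prime) (hodd : Odd p) (hpPQ : ¬ p ∣ Int.gcd P Q)
    (n : ℕ) (hpUn : (p : ℤ) ∣ lucasU P Q n) (k : ℕ) (hk : 1 ≤ k) :
    ∃ t : ℤ, lucasU P Q (p ^ k * n)
      = ((p : ℤ) + (p : ℤ) ^ (k + 1) * t) * lucasU P Q (p ^ (k - 1) * n) := by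
  obtain ⟨j, rfl⟩ : ∃ j, k = j + 1 := ⟨k - 1, by omega⟩
  obtain ⟨t, ht⟩ := lucasU_odd_mul_eq hodd (pow_succ_dvd_lucasU_pow_mul hp hodd hpPQ hpUn j)
    (pow_succ_dvd_pow_mul_div_two_sub_one_of_dvd_lucasU hp hodd hpPQ hpUn j)
  exact ⟨t, by rw [pow_succ', mul_assoc, ht, Nat.add_sub_cancel]⟩

theorem stmt_12 (P Q : ℤ) (hP : P ≠ 0) (hQ : Q ≠ 0) (hD : P ^ 2 - 4 * Q ≠ 0)
    (hnd : ∀ m : ℕ, 1 ≤ m → lucasU P Q m ≠ 0)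
    (p : ℕ) (hp : p.Prime) (hodd : Odd p) (hpD : ¬ (p : ℤ) ∣ (P ^ 2 - 4 * Q))
    (hpPQ : ¬ p ∣ Int.gcd P Q)
    (n : ℕ) (hn : 1 ≤ n) (hpn : Nat.gcd p n = 1)
    (hpUn : (p : ℤ) ∣ lucasU P Q n) (k : ℕ) (hk : 1 ≤ k) :
    ∃ t : ℤ, lucasU P Q (p ^ k * n)
      = ((p : ℤ) + (p : ℤ) ^ (k + 1) * t) * lucasU P Q (p ^ (k - 1) * n) :=
  stmt_12_general P Q p hp hodd hpPQ n hpUn k hk
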